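/- arXiv:1806.10561 — 2 statements merged into one kernel-verified Lean document; each statement's English description precedes it below -/
import Mathlib

section
/- Let φ be a satisfiable logically separable epistemic term in K_n, i an agent, and β' any formula. Then φ ⊨ □_i β' if and only if there exists β ∈ Box_i(φ) with β ⊨ β', or β' is valid. -/
universe u v

inductive Fm (A P : Type) : Type
  | tru : Fm A P
  | var : P → Fm A P
  | neg : Fm A P → Fm A P
  | and : Fm A P → Fm A P → Fm A P
  | box : A → Fm A P → Fm A P

namespace Fm
variable {A P : Type}
def or (φ ψ : Fm A P) : Fm A P := neg ((neg φ).and (neg ψ))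
def bot : Fm A P := neg tru
def dia (i : A) (φ : Fm A P) : Fm A P := neg (box i (neg φ))
end Fm

structure KM (A P : Type) where
  S : Type
  R : A → S → S → Prop
  V : S → P → Prop

variable {A P : Type}

def Sat (M : KM A P) : M.S → Fm A P → Prop
  | _, .tru => True
  | s, .var p => M.V s p
  | s, .neg φ => ¬ Sat M s φ
  | s, .and φ ψ => Sat M s φ ∧ Sat M s ψ
  | s, .box i φ => ∀ t, M.R i s t → Sat M t φ

def Satisfiable (φ : Fm A P) : Prop := ∃ (M : KM A P) (s : M.S), Sat M s φ

def Entails (φ ψ : Fm A P) : Prop := ∀ (M : KM A P) (s : M.S), Sat M s φ → Sat M s ψ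

def FEquiv (φ ψ : Fm A P) : Prop := Entails φ ψ ∧ Entails ψ φ

def IsProp : Fm A P → Prop
  | .tru => True
  | .var _ => True
  | .neg φ => IsProp φ
  | .and φ ψ => IsProp φ ∧ IsProp ψ
  | .box _ _ => False

def Basic (φ : Fm A P) : Prop :=
  IsProp φ ∨ (∃ i ψ, φ = Fm.box i ψ) ∨ (∃ i ψ, φ = Fm.dia i ψ)

def conj : List (Fm A P) → Fm A P
  | [] => Fm.tru
  | φ :: L => φ.and (conj L)

def disj : List (Fm A P) → Fm A P
  | [] => Fm.bot
  | φ :: L => φ.or (disj L)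

def EpTerm (L : List (Fm A P)) : Prop := ∀ c ∈ L, Basic c

def LogSep (L : List (Fm A P)) : Prop :=
  ∀ η : Fm A P, Basic η → Entails (conj L) η → ∃ α ∈ L, Entails α η

def fvars : Fm A P → Set P
  | .tru => ∅
  | .var p => {p}
  | .neg φ => fvars φ
  | .and φ ψ => fvars φ ∪ fvars ψ
  | .box _ φ => fvars φ

def fsize : Fm A P → ℕ
  | .tru => 1
  | .var _ => 1
  | .neg φ => fsize φ + 1
  | .and φ ψ => fsize φ + fsize ψ + 1
  | .box _ φ => fsize φ + 1

lemma sat_conj {M : KM A P} {s : M.S} {L : List (Fm A P)} :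
    Sat M s (conj L) ↔ ∀ c ∈ L, Sat M s c := by
  induction L with
  | nil => simp [conj, Sat]
  | cons a L ih => simp [conj, Sat, ih]

lemma sat_hom {M N : KM A P} (f : N.S → M.S)
    (hV : ∀ x p, N.V x p ↔ M.V (f x) p)
    (hforth : ∀ j x y, N.R j x y → M.R j (f x) (f y))
    (hback : ∀ j x z, M.R j (f x) z → ∃ y, N.R j x y ∧ z = f y) :
    ∀ (φ : Fm A P) (x : N.S), Sat N x φ ↔ Sat M (f x) φ := by
  intro φ
  induction φ with
  | tru => intro x; simp [Sat]
  | var p => intro x; simpa [Sat] using hV x p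
  | neg φ ih => intro x; simp [Sat, ih]
  | and φ ψ ih1 ih2 => intro x; simp [Sat, ih1, ih2]
  | box j φ ih =>
    intro x
    constructor
    · intro h z hz
      obtain ⟨y, hy, rfl⟩ := hback j x z hz
      exact (ih y).1 (h y hy)
    · intro h y hy
      exact (ih y).2 (h (f y) (hforth j x y hy))

lemma sat_prop {M N : KM A P} {s : M.S} {u : N.S}
    (hV : ∀ p, M.V s p ↔ N.V u p) :
    ∀ φ : Fm A P, IsProp φ → (Sat M s φ ↔ Sat N u φ) := by
  intro φ
  induction φ with
  | tru => intro _; simp [Sat]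
  | var p => intro _; simpa [Sat] using hV p
  | neg φ ih => intro h; simp [Sat, ih h]
  | and φ ψ ih1 ih2 => intro h; simp [Sat, ih1 h.1, ih2 h.2]
  | box j φ ih => intro h; exact h.elim

lemma box_ent {i : A} {ψ β' : Fm A P}
    (h : Entails (Fm.box i ψ) (Fm.box i β')) : Entails ψ β' := by
  intro M t ht
  by_contra hb'
  let M' : KM A P :=
    { S := Option M.S
      R := fun j x y => (x = none ∧ j = i ∧ y = some t) ∨
        (∃ x' y', x = some x' ∧ y = some y' ∧ M.R j x' y')
      V := fun x p => ∃ x', x = some x' ∧ M.V x' p }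
  have e : ∀ (φ : Fm A P) (x : M.S), Sat M x φ ↔ Sat M' (some x) φ := by
    refine sat_hom (M := M') (N := M) (fun x => some x) ?_ ?_ ?_
    · intro x p; constructor
      · intro h'; exact ⟨x, rfl, h'⟩
      · rintro ⟨x', hx, h'⟩
        obtain rfl : x = x' := by simpa using hx
        exact h'
    · intro j x y h'; exact Or.inr ⟨x, y, rfl, rfl, h'⟩
    · intro j x z hz
      rcases hz with ⟨hx, _⟩ | ⟨x', y', hx, hy, hr⟩
      · exact absurd hx (by simp)
      · refine ⟨y', ?_, hy⟩
        have : x = x' := by simpa using hx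
        exact this ▸ hr
  have hroot : Sat M' none (Fm.box i ψ) := by
    intro z hz
    rcases hz with ⟨_, _, rfl⟩ | ⟨x', y', hx, _, _⟩
    · exact (e ψ t).1 ht
    · exact absurd hx (by simp)
  have hb := h M' none hroot (some t) (Or.inl ⟨rfl, rfl, rfl⟩)
  exact hb' ((e β' t).2 hb)

lemma key_valid {i : A} {β' α : Fm A P} {M : KM A P} {s : M.S} (hα : Sat M s α)
    (hgood : IsProp α ∨ (∃ j ψ, j ≠ i ∧ α = Fm.box j ψ) ∨ (∃ j ψ, α = Fm.dia j ψ))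
    (hent : Entails α (Fm.box i β')) : Entails Fm.tru β' := by
  intro N u _
  let M' : KM A P :=
    { S := Option (M.S ⊕ N.S)
      R := fun j x y =>
        (x = none ∧ ∃ x', y = some (Sum.inl x') ∧ M.R j s x') ∨
        (x = none ∧ j = i ∧ y = some (Sum.inr u)) ∨
        (∃ x' y', x = some (Sum.inl x') ∧ y = some (Sum.inl y') ∧ M.R j x' y') ∨
        (∃ x' y', x = some (Sum.inr x') ∧ y = some (Sum.inr y') ∧ N.R j x' y')
      V := fun x p => match x with
        | none => M.V s p
        | some (Sum.inl x') => M.V x' p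
        | some (Sum.inr y') => N.V y' p }
  have e1 : ∀ (φ : Fm A P) (x : M.S), Sat M x φ ↔ Sat M' (some (Sum.inl x)) φ := by
    refine sat_hom (M := M') (N := M) (fun x => some (Sum.inl x)) (fun x p => Iff.rfl) ?_ ?_
    · intro j x y h'; exact Or.inr (Or.inr (Or.inl ⟨x, y, rfl, rfl, h'⟩))
    · intro j x z hz
      rcases hz with ⟨hx, _⟩ | ⟨hx, _, _⟩ | ⟨x', y', hx, hy, hr⟩ | ⟨x', y', hx, _, _⟩
      · exact absurd hx (by simp)
      · exact absurd hx (by simp)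
      · refine ⟨y', ?_, hy⟩
        have : x = x' := by simpa using hx
        exact this ▸ hr
      · exact absurd hx (by simp)
  have e2 : ∀ (φ : Fm A P) (y : N.S), Sat N y φ ↔ Sat M' (some (Sum.inr y)) φ := by
    refine sat_hom (M := M') (N := N) (fun y => some (Sum.inr y)) (fun x p => Iff.rfl) ?_ ?_
    · intro j x y h'; exact Or.inr (Or.inr (Or.inr ⟨x, y, rfl, rfl, h'⟩))
    · intro j x z hz
      rcases hz with ⟨hx, _⟩ | ⟨hx, _, _⟩ | ⟨x', y', hx, _, _⟩ | ⟨x', y', hx, hy, hr⟩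
      · exact absurd hx (by simp)
      · exact absurd hx (by simp)
      · exact absurd hx (by simp)
      · refine ⟨y', ?_, hy⟩
        have : x = x' := by simpa using hx
        exact this ▸ hr
  have hroot : Sat M' none α := by
    rcases hgood with hprop | ⟨j, ψ, hji, rfl⟩ | ⟨j, ψ, rfl⟩
    · exact (sat_prop (M := M) (N := M') (s := s) (u := none) (fun p => Iff.rfl) α hprop).1 hα
    · intro z hz
      rcases hz with ⟨_, x', rfl, hr⟩ | ⟨_, hj, _⟩ | ⟨x', y', hx, _, _⟩ | ⟨x', y', hx, _, _⟩
      · exact (e1 ψ x').1 (hα x' hr)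
      · exact absurd hj hji
      · exact absurd hx (by simp)
      · exact absurd hx (by simp)
    · have hα' : ¬ ∀ t, M.R j s t → ¬ Sat M t ψ := hα
      push_neg at hα'
      obtain ⟨t, hrt, hψ⟩ := hα'
      show ¬ Sat M' none (Fm.box j (Fm.neg ψ))
      intro hbox
      exact hbox (some (Sum.inl t)) (Or.inl ⟨rfl, t, rfl, hrt⟩) ((e1 ψ t).1 hψ)
  have hb := hent M' none hroot (some (Sum.inr u)) (Or.inr (Or.inl ⟨rfl, rfl, rfl⟩))
  exact (e2 β' u).2 hb

lemma valid_case {L : List (Fm A P)} {i : A} {β' : Fm A P}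
    (hval : Entails Fm.tru β') :
    ((∃ β : Fm A P, Fm.box i β ∈ L ∧ Entails β β') ∨
       ((¬ ∃ β : Fm A P, Fm.box i β ∈ L) ∧ Entails Fm.tru β')) := by
  by_cases hex : ∃ β, Fm.box i β ∈ L
  · obtain ⟨β, hb⟩ := hex
    exact Or.inl ⟨β, hb, fun M s _ => hval M s trivial⟩
  · exact Or.inr ⟨hex, hval⟩

theorem logically_separable_term_box_entailment
    (L : List (Fm A P)) (hterm : EpTerm L) (hsep : LogSep L)
    (hsat : Satisfiable (conj L)) (i : A) (β' : Fm A P) :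
    Entails (conj L) (Fm.box i β') ↔
      ((∃ β : Fm A P, Fm.box i β ∈ L ∧ Entails β β') ∨
       ((¬ ∃ β : Fm A P, Fm.box i β ∈ L) ∧ Entails Fm.tru β')) := by
  constructor
  · intro hent
    have hbasic : Basic (Fm.box i β') := Or.inr (Or.inl ⟨i, β', rfl⟩)
    obtain ⟨α, hmem, hαent⟩ := hsep _ hbasic hent
    obtain ⟨M, s, hs⟩ := hsat
    have hαs : Sat M s α := (sat_conj.1 hs) α hmem
    rcases hterm α hmem with hprop | ⟨j, ψ, rfl⟩ | ⟨j, ψ, rfl⟩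
    · exact valid_case (key_valid hαs (Or.inl hprop) hαent)
    · by_cases hj : j = i
      · subst hj; exact Or.inl ⟨ψ, hmem, box_ent hαent⟩
      · exact valid_case (key_valid hαs (Or.inr (Or.inl ⟨j, ψ, hj, rfl⟩)) hαent)
    · exact valid_case (key_valid hαs (Or.inr (Or.inr ⟨j, ψ, rfl⟩)) hαent)
  · rintro (⟨β, hmem, hent⟩ | ⟨_, hval⟩) M s hs
    · intro t ht
      exact hent M t ((sat_conj.1 hs) _ hmem t ht)
    · intro t _
      exact hval M t trivial
end

section
/- In K45_n, the equivalence □_i(φ ∨ (◇_i ψ ∧ η)) ↔ (□_i φ ∨ ◇_i ψ) ∧ □_i(φ ∨ η) is valid. -/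
universe u v

variable {A P : Type}

/-- The model is a `K45ₙ` model: every accessibility relation is transitive and Euclidean. -/
def TransEuc (M : KM A P) : Prop :=
  ∀ i : A, (∀ s t u : M.S, M.R i s t → M.R i t u → M.R i s u) ∧
           (∀ s t u : M.S, M.R i s t → M.R i s u → M.R i t u)

lemma sat_or (M : KM A P) (s : M.S) (φ ψ : Fm A P) :
    Sat M s (φ.or ψ) ↔ Sat M s φ ∨ Sat M s ψ := by
  simp [Fm.or, Sat]; tauto

lemma sat_dia (M : KM A P) (s : M.S) (i : A) (φ : Fm A P) :
    Sat M s (Fm.dia i φ) ↔ ∃ t, M.R i s t ∧ Sat M t φ := by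
  simp [Fm.dia, Sat]

theorem k45_box_or_dia_distribution (φ ψ η : Fm A P) (i : A) :
    ∀ M : KM A P, TransEuc M → ∀ s : M.S,
      Sat M s (Fm.box i (φ.or ((Fm.dia i ψ).and η))) ↔
      Sat M s (((Fm.box i φ).or (Fm.dia i ψ)).and (Fm.box i (φ.or η))) := by
  intro M hM s
  obtain ⟨htr, heu⟩ := hM i
  constructor
  · intro h
    refine ⟨?_, ?_⟩
    · rw [sat_or]
      by_cases hb : Sat M s (Fm.box i φ)
      · exact Or.inl hb
      · right
        simp only [Sat, not_forall] at hb
        obtain ⟨t, ht, hnφ⟩ := hb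
        rcases (sat_or ..).mp (h t ht) with h1 | h1
        · exact absurd h1 hnφ
        · obtain ⟨u, hu, hψ⟩ := (sat_dia ..).mp h1.1
          exact (sat_dia ..).mpr ⟨u, htr s t u ht hu, hψ⟩
    · intro t ht
      rw [sat_or]
      rcases (sat_or ..).mp (h t ht) with h1 | h1
      · exact Or.inl h1
      · exact Or.inr h1.2
  · rintro ⟨h1, h2⟩ t ht
    rw [sat_or]
    by_cases hφ : Sat M t φ
    · exact Or.inl hφ
    · right
      rcases (sat_or ..).mp (h2 t ht) with h | h
      · exact absurd h hφ
      refine ⟨?_, h⟩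
      rcases (sat_or ..).mp h1 with hb | hd
      · exact absurd (hb t ht) hφ
      · obtain ⟨u, hu, hψ⟩ := (sat_dia ..).mp hd
        exact (sat_dia ..).mpr ⟨u, heu s t u ht hu, hψ⟩
end
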